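/- arXiv:2211.02148 — 2 statements merged into one kernel-verified Lean document; each statement's English description precedes it below -/
import Mathlib

section
/- Let X be a subshift over an alphabet 𝒜 and R a commutative unital ring. Then there exists an isomorphism of R-algebras Φ : D̃_R(X) → Lc(𝒰̂, R) such that Φ(1_A) = 1_{O_A} for every A ∈ 𝒰 (in particular, 1_A ∈ D̃_R(X) for every A ∈ 𝒰). -/
open Set

section Subshift

variable {A : Type*}

/-- The word `w` occurs as a block of `x` at position `i`. -/
def IsBlockAt (x : ℕ → A) (w : List A) (i : ℕ) : Prop :=
  ∀ j, ∀ _ : j < w.length, x (i + j) = w[j]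

/-- The subshift `X_F ⊆ 𝒜^ℕ` determined by the set `F` of forbidden words. -/
def SubshiftOf (F : Set (List A)) : Set (ℕ → A) :=
  {x | ∀ w ∈ F, ∀ i, ¬ IsBlockAt x w i}

/-- The language of the subshift: all finite words occurring in some element of `X_F`. -/
def Lang (F : Set (List A)) : Set (List A) :=
  {w | ∃ x ∈ SubshiftOf F, ∃ i, IsBlockAt x w i}

/-- Concatenation of a finite word with an infinite sequence. -/
def wcat (w : List A) (x : ℕ → A) : ℕ → A := fun n =>
  if h : n < w.length then w[n] else x (n - w.length)

/-- `C(α,β) = {β x ∈ X : α x ∈ X}`. -/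
def Cset (F : Set (List A)) (α β : List A) : Set (ℕ → A) :=
  {y | ∃ x : ℕ → A, y = wcat β x ∧ wcat β x ∈ SubshiftOf F ∧ wcat α x ∈ SubshiftOf F}

/-- The cylinder set `Z_β = C(ω,β)`. -/
def Zcyl (F : Set (List A)) (β : List A) : Set (ℕ → A) := Cset F [] β

/-- The follower set `F_α = C(α,ω)`. -/
def Fol (F : Set (List A)) (α : List A) : Set (ℕ → A) := Cset F α []

/-- The relative range `r(S,w) = {x ∈ X : w x ∈ S}`. -/
def relRange (F : Set (List A)) (S : Set (ℕ → A)) (w : List A) : Set (ℕ → A) :=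
  {x | x ∈ SubshiftOf F ∧ wcat w x ∈ S}

/-- Membership in the Boolean algebra `𝒰` of subsets of `X` generated by the sets
`C(α,β)`, `α, β ∈ L_X`: closed under finite unions, finite intersections and
complements in `X`. -/
inductive InU (F : Set (List A)) : Set (ℕ → A) → Prop
  | base {α β : List A} (hα : α ∈ Lang F) (hβ : β ∈ Lang F) : InU F (Cset F α β)
  | union {S T : Set (ℕ → A)} : InU F S → InU F T → InU F (S ∪ T)
  | inter {S T : Set (ℕ → A)} : InU F S → InU F T → InU F (S ∩ T)
  | compl {S : Set (ℕ → A)} : InU F S → InU F (SubshiftOf F \ S)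

/-- `αβ⁻¹` is in reduced form in the free group on the alphabet:
`α` and `β` do not end in the same letter. -/
def ReducedPair (α β : List A) : Prop :=
  ¬ ∃ c : A, α.getLast? = some c ∧ β.getLast? = some c

/-- Ultrafilters (= prime filters) of the Boolean algebra `𝒰`. -/
structure UltraU (F : Set (List A)) where
  sets : Set (Set (ℕ → A))
  mem_inU : ∀ S ∈ sets, InU F S
  nonempty : sets.Nonempty
  empty_not_mem : ∅ ∉ sets
  inter_mem : ∀ S ∈ sets, ∀ T ∈ sets, S ∩ T ∈ sets
  superset_mem : ∀ S ∈ sets, ∀ T : Set (ℕ → A), InU F T → S ⊆ T → T ∈ sets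
  prime : ∀ S T : Set (ℕ → A), InU F S → InU F T → S ∪ T ∈ sets → S ∈ sets ∨ T ∈ sets

/-- The basic (compact) open set `O_S = {ξ ∈ 𝒰̂ : S ∈ ξ}` of the Stone dual `𝒰̂`. -/
def Oset (F : Set (List A)) (S : Set (ℕ → A)) : Set (UltraU F) := {ξ | S ∈ ξ.sets}

/-- The Stone topology on `𝒰̂`. -/
instance (F : Set (List A)) : TopologicalSpace (UltraU F) :=
  TopologicalSpace.generateFrom {V | ∃ S : Set (ℕ → A), InU F S ∧ V = Oset F S}

/-- The graph of the partially defined map `σ̂` on `𝒰̂`: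
`sigmaHatRel F ξ η` holds iff `ξ ∈ dom σ̂` and `η = σ̂(ξ)`. -/
def sigmaHatRel (F : Set (List A)) (ξ η : UltraU F) : Prop :=
  ∃ a : A, Zcyl F [a] ∈ ξ.sets ∧
    η.sets = {B : Set (ℕ → A) | InU F B ∧ ∃ S ∈ ξ.sets, relRange F S [a] ⊆ B}

/- The OTW subshift, modelled inside `ℕ → Option A`; a finite word corresponds to a
sequence that is eventually `none` (`none` playing the role of the symbol `∞`). -/

/-- The shift map, deleting the first letter (it sends sequences of length `≤ 1`
to the empty sequence). -/
def shiftO (y : ℕ → Option A) : ℕ → Option A := fun i => y (i + 1)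

/-- An infinite sequence, as an element of the OTW model. -/
def ofSeq (x : ℕ → A) : ℕ → Option A := fun i => some (x i)

/-- A finite word, as an element of the OTW model. -/
def ofWord (w : List A) : ℕ → Option A := fun i =>
  if h : i < w.length then some w[i] else none

/-- Concatenation of a finite word with an element of the OTW model. -/
def wcatO (w : List A) (y : ℕ → Option A) : ℕ → Option A := fun n =>
  if h : n < w.length then some w[n] else y (n - w.length)

/-- The finite words belonging to `X^fin`: those `w` for which there are infinitely many
letters `a` such that `w a y ∈ X^inf` for some `y`. -/
def XFin (F : Set (List A)) : Set (List A) :=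
  {w | {a : A | ∃ y : ℕ → A, wcat (w ++ [a]) y ∈ SubshiftOf F}.Infinite}

/-- The OTW subshift `X^OTW = X^inf ∪ X^fin`. -/
def OTW (F : Set (List A)) : Set (ℕ → Option A) :=
  ofSeq '' SubshiftOf F ∪ ofWord '' XFin F

theorem ofSeq_mem_OTW {F : Set (List A)} {x : ℕ → A} (hx : x ∈ SubshiftOf F) :
    ofSeq x ∈ OTW F := Or.inl ⟨x, hx, rfl⟩

theorem ofWord_mem_OTW {F : Set (List A)} {w : List A} (hw : w ∈ XFin F) :
    ofWord w ∈ OTW F := Or.inr ⟨w, hw, rfl⟩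

/-- The generalised cylinder `𝒵(w,F') = {y ∈ X^OTW : y` begins with `w`, and the next
letter of `y` is not in `F'}`. -/
def genCyl (F : Set (List A)) (w : List A) (F' : Set A) : Set (ℕ → Option A) :=
  {y | y ∈ OTW F ∧ (∀ j, ∀ _ : j < w.length, y j = some w[j]) ∧
    ∀ a ∈ F', y w.length ≠ some a}

/-- The follower set `ℱ(w) = {y ∈ X^OTW : w y ∈ X^OTW}` in the OTW subshift. -/
def folO (F : Set (List A)) (w : List A) : Set (ℕ → Option A) :=
  {y | y ∈ OTW F ∧ wcatO w y ∈ OTW F}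

/-- The topology on `X^OTW`, generated by the generalised cylinders. -/
instance (F : Set (List A)) : TopologicalSpace ↥(OTW F) :=
  TopologicalSpace.generateFrom
    {V | ∃ w ∈ Lang F, ∃ F' : Set A, F'.Finite ∧
      V = {y : ↥(OTW F) | (y : ℕ → Option A) ∈ genCyl F w F'}}

/-- The graph of the map `π : 𝒰̂ → X^OTW`: `piRel F ξ y` holds iff `π(ξ) = y`.
(`y` begins with a nonempty word `w` iff `Z_w ∈ ξ`.) -/
def piRel (F : Set (List A)) (ξ : UltraU F) (y : ℕ → Option A) : Prop :=
  (∀ i, y i = none → y (i + 1) = none) ∧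
  ∀ w : List A, w ≠ [] →
    ((∀ j, ∀ _ : j < w.length, y j = some w[j]) ↔ Zcyl F w ∈ ξ.sets)

end Subshift

section Conjugacy

variable {A₁ A₂ : Type*}

/-- `h` commutes with the shift maps. -/
def ShiftCommuting (F₁ : Set (List A₁)) (F₂ : Set (List A₂))
    (h : ↥(OTW F₁) → ↥(OTW F₂)) : Prop :=
  ∀ (y : ↥(OTW F₁)) (hy : shiftO (y : ℕ → Option A₁) ∈ OTW F₁),
    (h ⟨shiftO (y : ℕ → Option A₁), hy⟩ : ℕ → Option A₂) =
      shiftO ((h y : ℕ → Option A₂))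

/-- `h` is length-preserving: `h y` and `y` have the same length, i.e. the same
positions where the symbol `∞` (here `none`) occurs. -/
def LengthPreserving (F₁ : Set (List A₁)) (F₂ : Set (List A₂))
    (h : ↥(OTW F₁) → ↥(OTW F₂)) : Prop :=
  ∀ (y : ↥(OTW F₁)) (i : ℕ),
    ((h y : ℕ → Option A₂) i = none ↔ (y : ℕ → Option A₁) i = none)

/-- A conjugacy of OTW subshifts: a homeomorphism commuting with the shifts and
preserving lengths. -/
def IsConjugacy (F₁ : Set (List A₁)) (F₂ : Set (List A₂))
    (h : ↥(OTW F₁) ≃ₜ ↥(OTW F₂)) : Prop :=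
  ShiftCommuting F₁ F₂ ⇑h ∧ LengthPreserving F₁ F₂ ⇑h

/-- The image `h̄(S) = h(S)` of a subset `S ⊆ X₁` under (the restriction to `X₁` of)
a map `h : X₁^OTW → X₂^OTW`. -/
def hbar (F₁ : Set (List A₁)) (F₂ : Set (List A₂))
    (h : ↥(OTW F₁) → ↥(OTW F₂)) (S : Set (ℕ → A₁)) : Set (ℕ → A₂) :=
  {z | ∃ y : ↥(OTW F₁), (y : ℕ → Option A₁) ∈ ofSeq '' S ∧
    ofSeq z = (h y : ℕ → Option A₂)}

end Conjugacy

/-- The characteristic function `1_S : X → R` of a subset `S` of the subshift. -/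
noncomputable def chi {A : Type*} (F : Set (List A)) (R : Type*) [CommRing R]
    (S : Set (ℕ → A)) : ↥(SubshiftOf F) → R :=
  Set.indicator {x : ↥(SubshiftOf F) | (x : ℕ → A) ∈ S} fun _ => 1

/-- The (possibly non-unital) `R`-algebra `Lc(Y,R)` of locally constant compactly
supported functions `Y → R`, as a non-unital subalgebra of `Y → R`. -/
def LcSub (R : Type*) [CommRing R] (Y : Type*) [TopologicalSpace Y] :
    NonUnitalSubalgebra R (Y → R) where
  carrier := {f : Y → R | IsLocallyConstant f ∧ HasCompactSupport f}
  add_mem' := fun hf hg => ⟨hf.1.comp₂ hg.1 (· + ·), hf.2.add hg.2⟩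
  zero_mem' := by
    refine ⟨IsLocallyConstant.const 0, ?_⟩
    rw [hasCompactSupport_def]
    simp
  mul_mem' := fun hf hg => ⟨hf.1.comp₂ hg.1 (· * ·), hf.2.mul_right⟩
  smul_mem' := fun c f hf =>
    ⟨hf.1.comp fun y => c • y, hf.2.mono (Function.support_const_smul_subset c f)⟩

/-- The algebra `D̃_R(X)`: the `R`-subalgebra of the functions `X → R` generated by the
characteristic functions `1_{C(α,β)}`, `α, β ∈ L_X`. -/
noncomputable def DRsub {A : Type*} (F : Set (List A)) (R : Type*) [CommRing R] :
    NonUnitalSubalgebra R (↥(SubshiftOf F) → R) :=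
  NonUnitalAlgebra.adjoin R
    {f : ↥(SubshiftOf F) → R | ∃ α ∈ Lang F, ∃ β ∈ Lang F, f = chi F R (Cset F α β)}

/-!
`Φ` is the inverse of precomposition with `x ↦ {A ∈ 𝒰 : x ∈ A}`, which sends a point of `X` to
its principal ultrafilter and turns `1_{O_A}` into `1_A`. Precomposition is injective on
`Lc(𝒰̂, R)` because principal ultrafilters are dense in `𝒰̂`. Its image is `D̃_R(X)`: a locally
constant compactly supported function is a finite combination of indicators of compact open sets,
the compact open subsets of `𝒰̂` are exactly the sets `O_A`, and the `1_A` generate `D̃_R(X)`.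
-/

def NonUnitalAlgHom.funLeft (R : Type*) [Semiring R] {X Y : Type*} (g : X → Y) :
    (Y → R) →ₙₐ[R] (X → R) where
  toFun f := f ∘ g
  map_smul' _ _ := rfl
  map_zero' := rfl
  map_add' _ _ := rfl
  map_mul' _ _ := rfl

section LocallyConstant

variable {Y : Type*} [TopologicalSpace Y]

theorem indicator_one_mem_LcSub (R : Type*) [CommRing R] {U : Set Y} (hU : IsClopen U)
    (hc : IsCompact U) : U.indicator (fun _ => (1 : R)) ∈ LcSub R Y :=
  ⟨((LocallyConstant.const Y (1 : R)).indicator hU).isLocallyConstant,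
    HasCompactSupport.intro' hc hU.isClosed fun _ h => Set.indicator_of_notMem h _⟩

theorem IsLocallyConstant.eq_of_eqOn_dense {Z : Type*} {f g : Y → Z} (hf : IsLocallyConstant f)
    (hg : IsLocallyConstant g) {s : Set Y} (hs : Dense s) (h : Set.EqOn f g s) : f = g := by
  let _ : TopologicalSpace Z := ⊥
  have : DiscreteTopology Z := ⟨rfl⟩
  exact hf.continuous.ext_on hs hg.continuous h

/-- `f` takes finitely many values and is `∑ r • 1_{f⁻¹{r}}` over its nonzero values `r`. -/
theorem IsLocallyConstant.mem_span_indicator {R : Type*} [Semiring R] {f : Y → R}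
    (hf : IsLocallyConstant f) (hc : HasCompactSupport f) :
    f ∈ Submodule.span R
      {g | ∃ U : Set Y, IsClopen U ∧ IsCompact U ∧ g = U.indicator fun _ => (1 : R)} := by
  classical
  have hfin : (f '' Function.support f).Finite := by
    have := isCompact_iff_compactSpace.mp hc.isCompact
    refine (Set.Finite.subset ?_ (Set.image_mono (subset_tsupport f)))
    rw [Set.image_eq_range]
    exact (hf.comp_continuous continuous_subtype_val).range_finite
  have hsum : f = ∑ r ∈ hfin.toFinset, r • (f ⁻¹' {r}).indicator fun _ => (1 : R) := by
    funext ξ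
    simp only [Finset.sum_apply, Pi.smul_apply, Set.indicator_apply, Set.mem_preimage,
      Set.mem_singleton_iff, smul_eq_mul, mul_ite, mul_one, mul_zero, Finset.sum_ite_eq,
      Set.Finite.mem_toFinset]
    split_ifs with h
    · rfl
    · by_contra hne
      exact h ⟨ξ, hne, rfl⟩
  rw [hsum]
  refine Submodule.sum_mem _ fun r hr => Submodule.smul_mem _ _ (Submodule.subset_span ?_)
  obtain ⟨ξ, hξ, rfl⟩ := hfin.mem_toFinset.mp hr
  have hfib : IsClopen (f ⁻¹' {f ξ}) := hf.isClopen_fiber (f ξ)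
  refine ⟨_, hfib, hc.isCompact.of_isClosed_subset hfib.isClosed ?_, rfl⟩
  exact fun η hη => subset_tsupport f (show f η ≠ 0 from hη ▸ hξ)

end LocallyConstant

section StoneDual

variable {A : Type*} {F : Set (List A)}

theorem Cset_nil_nil : Cset F [] [] = SubshiftOf F := by
  ext y
  constructor
  · rintro ⟨x, rfl, hx, -⟩
    exact hx
  · intro hy
    exact ⟨y, rfl, hy, hy⟩

theorem nil_mem_Lang_of_mem {x : ℕ → A} (hx : x ∈ SubshiftOf F) : ([] : List A) ∈ Lang F :=
  ⟨x, hx, 0, fun _ h => absurd h (Nat.not_lt_zero _)⟩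

namespace InU

variable {S T : Set (ℕ → A)}

theorem subset_subshiftOf (h : InU F S) : S ⊆ SubshiftOf F := by
  induction h with
  | base => rintro y ⟨x, rfl, hx, -⟩; exact hx
  | union _ _ ih₁ ih₂ => exact Set.union_subset ih₁ ih₂
  | inter _ _ ih₁ _ => exact Set.inter_subset_left.trans ih₁
  | compl _ _ => exact Set.sdiff_subset

theorem nil_mem_Lang (h : InU F S) : ([] : List A) ∈ Lang F := by
  induction h with
  | base hα => obtain ⟨x, hx, -⟩ := hα; exact nil_mem_Lang_of_mem hx
  | union _ _ ih => exact ih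
  | inter _ _ ih => exact ih
  | compl _ ih => exact ih

theorem subshiftOf (h : InU F S) : InU F (SubshiftOf F) :=
  Cset_nil_nil (F := F) ▸ base h.nil_mem_Lang h.nil_mem_Lang

theorem empty (h : InU F S) : InU F ∅ := by
  simpa using h.subshiftOf.compl

theorem biUnion {ι : Type*} (h₀ : InU F S) (s : Finset ι) {T : ι → Set (ℕ → A)}
    (hT : ∀ i, InU F (T i)) : InU F (⋃ i ∈ s, T i) := by
  classical
  induction s using Finset.induction_on with
  | empty => simpa using h₀.empty
  | insert i s _ ih =>
    rw [Finset.set_biUnion_insert]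
    exact (hT i).union ih

end InU

namespace UltraU

variable (ξ : UltraU F) {S : Set (ℕ → A)}

theorem nonempty_of_mem (h : S ∈ ξ.sets) : S.Nonempty :=
  Set.nonempty_iff_ne_empty.mpr fun h' => ξ.empty_not_mem (h' ▸ h)

theorem subshiftOf_mem : SubshiftOf F ∈ ξ.sets := by
  obtain ⟨S, hS⟩ := ξ.nonempty
  have h := ξ.mem_inU S hS
  exact ξ.superset_mem S hS _ h.subshiftOf h.subset_subshiftOf

end UltraU

theorem Oset_mono {S T : Set (ℕ → A)} (hT : InU F T) (h : S ⊆ T) : Oset F S ⊆ Oset F T :=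
  fun ξ hξ => ξ.superset_mem S hξ T hT h

theorem Oset_empty : Oset F (∅ : Set (ℕ → A)) = ∅ :=
  Set.eq_empty_of_forall_notMem fun ξ => ξ.empty_not_mem

theorem Oset_inter {S T : Set (ℕ → A)} (hS : InU F S) (hT : InU F T) :
    Oset F (S ∩ T) = Oset F S ∩ Oset F T :=
  Set.Subset.antisymm
    (Set.subset_inter (Oset_mono hS Set.inter_subset_left)
      (Oset_mono hT Set.inter_subset_right))
    fun ξ ⟨hξS, hξT⟩ => ξ.inter_mem S hξS T hξT

theorem Oset_union {S T : Set (ℕ → A)} (hS : InU F S) (hT : InU F T) :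
    Oset F (S ∪ T) = Oset F S ∪ Oset F T :=
  Set.Subset.antisymm (fun ξ hξ => ξ.prime S T hS hT hξ)
    (Set.union_subset (Oset_mono (hS.union hT) Set.subset_union_left)
      (Oset_mono (hS.union hT) Set.subset_union_right))

theorem Oset_subshiftOf_diff {S : Set (ℕ → A)} (hS : InU F S) :
    Oset F (SubshiftOf F \ S) = (Oset F S)ᶜ := by
  ext ξ
  constructor
  · intro hξ hξS
    exact ξ.empty_not_mem (by simpa using ξ.inter_mem S hξS _ hξ)
  · intro hξS
    have hX : S ∪ (SubshiftOf F \ S) ∈ ξ.sets := by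
      rw [Set.union_sdiff_cancel hS.subset_subshiftOf]
      exact ξ.subshiftOf_mem
    exact (ξ.prime _ _ hS hS.compl hX).resolve_left hξS

theorem Oset_biUnion {ι : Type*} {S : Set (ℕ → A)} (h₀ : InU F S) (s : Finset ι)
    {T : ι → Set (ℕ → A)} (hT : ∀ i, InU F (T i)) :
    Oset F (⋃ i ∈ s, T i) = ⋃ i ∈ s, Oset F (T i) := by
  classical
  induction s using Finset.induction_on with
  | empty => simpa using Oset_empty
  | insert i s _ ih =>
    rw [Finset.set_biUnion_insert, Oset_union (hT i) (h₀.biUnion s hT), ih,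
      Finset.set_biUnion_insert]

theorem isTopologicalBasis_Oset :
    TopologicalSpace.IsTopologicalBasis {V : Set (UltraU F) | ∃ S, InU F S ∧ V = Oset F S} where
  exists_subset_inter := by
    rintro _ ⟨S, hS, rfl⟩ _ ⟨T, hT, rfl⟩ ξ hξ
    exact ⟨Oset F (S ∩ T), ⟨_, hS.inter hT, rfl⟩, (Oset_inter hS hT).symm ▸ hξ,
      (Oset_inter hS hT).le⟩
  sUnion_eq := Set.eq_univ_of_forall fun ξ =>
    ⟨_, ⟨_, ξ.mem_inU _ ξ.subshiftOf_mem, rfl⟩, ξ.subshiftOf_mem⟩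
  eq_generateFrom := rfl

/-- The limit of an ultrafilter `𝔉` on `𝒰̂` containing `O_S`. -/
def UltraU.ofUltrafilter (𝔉 : Ultrafilter (UltraU F)) {S : Set (ℕ → A)} (hS : InU F S)
    (hS𝔉 : Oset F S ∈ 𝔉) : UltraU F where
  sets := {T | InU F T ∧ Oset F T ∈ 𝔉}
  mem_inU _ h := h.1
  nonempty := ⟨S, hS, hS𝔉⟩
  empty_not_mem h := Ultrafilter.empty_notMem (Oset_empty (F := F) ▸ h.2)
  inter_mem _ hT _ hT' :=
    ⟨hT.1.inter hT'.1, (Oset_inter hT.1 hT'.1).symm ▸ Filter.inter_mem hT.2 hT'.2⟩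
  superset_mem _ hT _ hT' h := ⟨hT', Filter.mem_of_superset hT.2 (Oset_mono hT' h)⟩
  prime _ _ hT hT' h :=
    (Ultrafilter.union_mem_iff.mp (Oset_union hT hT' ▸ h.2)).imp
      (fun h' => ⟨hT, h'⟩) (fun h' => ⟨hT', h'⟩)

theorem isCompact_Oset {S : Set (ℕ → A)} (hS : InU F S) : IsCompact (Oset F S) := by
  refine isCompact_iff_ultrafilter_le_nhds'.mpr fun 𝔉 hS𝔉 =>
    ⟨UltraU.ofUltrafilter 𝔉 hS hS𝔉, ⟨hS, hS𝔉⟩, ?_⟩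
  refine isTopologicalBasis_Oset.nhds_hasBasis.ge_iff.mpr ?_
  rintro _ ⟨⟨T, hT, rfl⟩, hξT⟩
  exact hξT.2

theorem isClopen_Oset {S : Set (ℕ → A)} (hS : InU F S) : IsClopen (Oset F S) :=
  ⟨isOpen_compl_iff.mp <|
      Oset_subshiftOf_diff hS ▸ isTopologicalBasis_Oset.isOpen ⟨_, hS.compl, rfl⟩,
    isTopologicalBasis_Oset.isOpen ⟨S, hS, rfl⟩⟩

theorem exists_Oset_eq_of_isCompact_isOpen {U : Set (UltraU F)} (hne : U.Nonempty)
    (hc : IsCompact U) (ho : IsOpen U) : ∃ T, InU F T ∧ Oset F T = U := by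
  obtain ⟨ξ, -⟩ := hne
  obtain ⟨S, hS⟩ := ξ.nonempty
  have h₀ : InU F S := ξ.mem_inU S hS
  have hb : Set.range (fun T : Subtype (InU F) => Oset F T.1) =
      {V | ∃ S, InU F S ∧ V = Oset F S} :=
    Set.ext fun _ => ⟨fun ⟨T, h⟩ => ⟨T.1, T.2, h.symm⟩, fun ⟨S, hS, h⟩ => ⟨⟨S, hS⟩, h.symm⟩⟩
  obtain ⟨s, hs, rfl⟩ := eq_finite_iUnion_of_isTopologicalBasis_of_isCompact_open _
    (hb ▸ isTopologicalBasis_Oset) U hc ho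
  refine ⟨⋃ T ∈ hs.toFinset, T.1, h₀.biUnion _ fun T => T.2, ?_⟩
  rw [Oset_biUnion h₀ _ fun T => T.2]
  simp only [Set.Finite.mem_toFinset]

def UltraU.principal (x : ↥(SubshiftOf F)) : UltraU F where
  sets := {S | InU F S ∧ (x : ℕ → A) ∈ S}
  mem_inU _ h := h.1
  nonempty :=
    ⟨SubshiftOf F, Cset_nil_nil (F := F) ▸ InU.base (nil_mem_Lang_of_mem x.2)
      (nil_mem_Lang_of_mem x.2), x.2⟩
  empty_not_mem h := h.2
  inter_mem _ hS _ hT := ⟨hS.1.inter hT.1, hS.2, hT.2⟩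
  superset_mem _ hS _ hT h := ⟨hT, h hS.2⟩
  prime _ _ hS hT h := h.2.imp (fun h' => ⟨hS, h'⟩) (fun h' => ⟨hT, h'⟩)

theorem dense_range_principal : Dense (Set.range (UltraU.principal (F := F))) := by
  refine isTopologicalBasis_Oset.dense_iff.mpr ?_
  rintro _ ⟨T, hT, rfl⟩ ⟨ξ, hξ⟩
  obtain ⟨x, hx⟩ := ξ.nonempty_of_mem hξ
  exact ⟨UltraU.principal ⟨x, hT.subset_subshiftOf hx⟩, ⟨hT, hx⟩, _, rfl⟩

variable (R : Type*) [CommRing R]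

theorem chi_eq_indicator (S : Set (ℕ → A)) :
    chi F R S = (Subtype.val ⁻¹' S).indicator 1 := rfl

theorem funLeft_principal_indicator_Oset {S : Set (ℕ → A)} (hS : InU F S) :
    NonUnitalAlgHom.funLeft R UltraU.principal ((Oset F S).indicator fun _ => (1 : R)) =
      chi F R S := by
  classical
  funext x
  simp only [chi_eq_indicator, Set.indicator_apply, Set.mem_preimage, Pi.one_apply]
  exact if_congr ⟨fun h => h.2, fun h => ⟨hS, h⟩⟩ rfl rfl

theorem chi_mem_DRsub {S : Set (ℕ → A)} (hS : InU F S) : chi F R S ∈ DRsub F R := by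
  induction hS with
  | base hα hβ => exact NonUnitalAlgebra.subset_adjoin R ⟨_, hα, _, hβ, rfl⟩
  | @union S T _ _ ihS ihT =>
    have h : chi F R (S ∪ T) = chi F R S + chi F R T - chi F R S * chi F R T := by
      simp only [chi_eq_indicator, eq_sub_iff_add_eq, ← Set.inter_indicator_one,
        Set.preimage_union, Set.indicator_union_add_inter]
    exact h ▸ sub_mem (add_mem ihS ihT) (mul_mem ihS ihT)
  | @inter S T _ _ ihS ihT =>
    have h : chi F R (S ∩ T) = chi F R S * chi F R T := by
      simp only [chi_eq_indicator, Set.preimage_inter, Set.inter_indicator_one]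
    exact h ▸ mul_mem ihS ihT
  | @compl S hS ihS =>
    have hX : chi F R (Cset F [] []) ∈ DRsub F R :=
      NonUnitalAlgebra.subset_adjoin R ⟨[], hS.nil_mem_Lang, [], hS.nil_mem_Lang, rfl⟩
    rw [Cset_nil_nil] at hX
    have h : chi F R (SubshiftOf F \ S) = chi F R (SubshiftOf F) - chi F R S := by
      simp only [chi_eq_indicator, Set.preimage_sdiff]
      exact Set.indicator_sdiff (Set.preimage_mono hS.subset_subshiftOf) _
    exact h ▸ sub_mem hX ihS

theorem indicator_Oset_mem_LcSub {S : Set (ℕ → A)} (hS : InU F S) :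
    (Oset F S).indicator (fun _ => (1 : R)) ∈ LcSub R (UltraU F) :=
  indicator_one_mem_LcSub R (isClopen_Oset hS) (isCompact_Oset hS)

theorem funLeft_principal_mem_DRsub {f : UltraU F → R} (hf : f ∈ LcSub R (UltraU F)) :
    NonUnitalAlgHom.funLeft R UltraU.principal f ∈ DRsub F R := by
  refine Submodule.span_induction ?_ (zero_mem _) (fun _ _ _ _ => add_mem)
    (fun c _ _ => SMulMemClass.smul_mem c) (hf.1.mem_span_indicator hf.2)
  · rintro _ ⟨U, hUc, hUk, rfl⟩
    rcases U.eq_empty_or_nonempty with rfl | hne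
    · rw [Set.indicator_empty', map_zero]
      exact zero_mem _
    obtain ⟨T, hT, rfl⟩ := exists_Oset_eq_of_isCompact_isOpen hne hUk hUc.isOpen
    exact funLeft_principal_indicator_Oset R hT ▸ chi_mem_DRsub R hT

theorem DRsub_le_map_LcSub :
    DRsub F R ≤ (LcSub R (UltraU F)).map (NonUnitalAlgHom.funLeft R UltraU.principal) :=
  NonUnitalAlgebra.adjoin_le fun _ ⟨_, hα, _, hβ, h⟩ =>
    ⟨_, indicator_Oset_mem_LcSub R (InU.base hα hβ),
      h ▸ funLeft_principal_indicator_Oset R (InU.base hα hβ)⟩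

theorem injOn_funLeft_principal :
    Set.InjOn (NonUnitalAlgHom.funLeft R (UltraU.principal (F := F))) (LcSub R (UltraU F)) :=
  fun _ hf _ hg h => hf.1.eq_of_eqOn_dense hg.1 dense_range_principal
    (Set.forall_mem_range.mpr (congrFun h))

noncomputable def restrictPrincipal (F : Set (List A)) : LcSub R (UltraU F) →ₙₐ[R] DRsub F R :=
  NonUnitalAlgHom.codRestrict
    ((NonUnitalAlgHom.funLeft R UltraU.principal).comp
      (NonUnitalSubalgebraClass.subtype (LcSub R (UltraU F))))
    (DRsub F R) fun f => funLeft_principal_mem_DRsub R f.2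

theorem bijective_restrictPrincipal : Function.Bijective (restrictPrincipal R F) := by
  refine ⟨fun f g h => Subtype.ext (injOn_funLeft_principal R f.2 g.2 congr(($h).1)), ?_⟩
  rintro ⟨g, hg⟩
  obtain ⟨f, hf, rfl⟩ := DRsub_le_map_LcSub R hg
  exact ⟨⟨f, hf⟩, rfl⟩

end StoneDual

theorem DRX_iso_Lc_of_stone_dual {A : Type*} (F : Set (List A)) (R : Type*) [CommRing R] :
    (∀ S : Set (ℕ → A), InU F S → chi F R S ∈ DRsub F R) ∧
    ∃ Φ : ↥(DRsub F R) →ₙₐ[R] ↥(LcSub R (UltraU F)),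
      Function.Bijective Φ ∧
      ∀ (S : Set (ℕ → A)) (_ : InU F S) (hm : chi F R S ∈ DRsub F R),
        (↑(Φ ⟨chi F R S, hm⟩) : UltraU F → R) = Set.indicator (Oset F S) fun _ => 1 := by
  have hΨ := bijective_restrictPrincipal R (F := F)
  let Φ := (restrictPrincipal R F).inverse (Function.surjInv hΨ.2)
    (Function.leftInverse_surjInv hΨ) (Function.rightInverse_surjInv hΨ.2)
  refine ⟨fun S hS => chi_mem_DRsub R hS, Φ, ?_, fun S hS hm => ?_⟩
  · exact Function.bijective_iff_has_inverse.mpr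
      ⟨restrictPrincipal R F, Function.rightInverse_surjInv hΨ.2, Function.leftInverse_surjInv hΨ⟩
  · have hΨS : restrictPrincipal R F ⟨_, indicator_Oset_mem_LcSub R hS⟩ = ⟨chi F R S, hm⟩ :=
      Subtype.ext (funLeft_principal_indicator_Oset R hS)
    rw [← hΨS]
    exact congrArg Subtype.val (Function.leftInverse_surjInv hΨ _)
end

section
/- Let X be a subshift over an alphabet 𝒜. The map ι : X → 𝒰̂ defined by ι(x) = {A ∈ 𝒰 : x ∈ A} is injective and its image is dense in 𝒰̂. Moreover, ι is equivariant: for all α, β ∈ L_X with αβ⁻¹ in reduced form and all βx ∈ C(α,β), one has ι(βx) ∈ O_{C(α,β)} and φ̂_{αβ⁻¹}(ι(βx)) = ι(αx), where φ̂_{αβ⁻¹} : O_{C(α,β)} → O_{C(β,α)} is given by φ̂_{αβ⁻¹}(ξ) = {A ∈ 𝒰 : r(B,β) ⊆ r(A,α) for some B ∈ ξ}. -/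
open Set

section AuxLemmas

variable {A : Type*}

lemma wcat_nil (x : ℕ → A) : wcat ([] : List A) x = x := by
  funext n; simp [wcat]

lemma wcat_lt {w : List A} {x : ℕ → A} {n : ℕ} (h : n < w.length) :
    wcat w x n = w[n] := by
  unfold wcat; rw [dif_pos h]

lemma wcat_add (w : List A) (x : ℕ → A) (n : ℕ) : wcat w x (n + w.length) = x n := by
  unfold wcat
  rw [dif_neg (by omega)]
  congr 1
  omega

lemma tail_mem {F : Set (List A)} {x : ℕ → A} (hx : x ∈ SubshiftOf F) (k : ℕ) :
    (fun n => x (n + k)) ∈ SubshiftOf F := by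
  intro w hw i hblk
  apply hx w hw (i + k)
  intro j hj
  have h2 := hblk j hj
  simp only at h2
  rw [show i + k + j = i + j + k by omega]
  exact h2

lemma drop_wcat {F : Set (List A)} {w : List A} {x : ℕ → A}
    (h : wcat w x ∈ SubshiftOf F) : x ∈ SubshiftOf F := by
  have h2 := tail_mem h w.length
  have hx : (fun n => wcat w x (n + w.length)) = x := by
    funext n; exact wcat_add w x n
  rwa [hx] at h2

lemma wcat_right_inj {w : List A} {y z : ℕ → A} (h : wcat w y = wcat w z) : y = z := by
  funext n
  have h2 := congrFun h (n + w.length)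
  rwa [wcat_add, wcat_add] at h2

lemma wcat_wcat (u v : List A) (x : ℕ → A) : wcat u (wcat v x) = wcat (u ++ v) x := by
  funext n
  unfold wcat
  rcases lt_or_ge n u.length with h1 | h1
  · rw [dif_pos h1, dif_pos (by simp; omega)]
    rw [List.getElem_append_left h1]
  · rw [dif_neg (by omega)]
    rcases lt_or_ge n (u.length + v.length) with h2 | h2
    · rw [dif_pos (by omega), dif_pos (by simp; omega)]
      rw [List.getElem_append_right h1]
    · rw [dif_neg (by omega), dif_neg (by simp; omega)]
      congr 1
      simp
      omega

lemma mem_lang_of {F : Set (List A)} {w : List A} {x : ℕ → A}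
    (h : wcat w x ∈ SubshiftOf F) : w ∈ Lang F :=
  ⟨wcat w x, h, 0, fun j hj => by rw [Nat.zero_add]; exact wcat_lt hj⟩

lemma inU_subset {F : Set (List A)} {S : Set (ℕ → A)} (h : InU F S) :
    S ⊆ SubshiftOf F := by
  induction h with
  | base hα hβ => rintro y ⟨x, rfl, hx, -⟩; exact hx
  | union _ _ ih1 ih2 => exact Set.union_subset ih1 ih2
  | inter _ _ ih1 ih2 => exact Set.inter_subset_left.trans ih1
  | compl _ _ => exact Set.diff_subset

lemma cset_nil_nil {F : Set (List A)} : Cset F ([] : List A) [] = SubshiftOf F := by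
  ext y
  constructor
  · rintro ⟨x, rfl, hx, -⟩; exact hx
  · intro hy
    exact ⟨y, (wcat_nil y).symm, by rwa [wcat_nil], by rwa [wcat_nil]⟩

lemma nil_mem_lang {F : Set (List A)} {x : ℕ → A} (hx : x ∈ SubshiftOf F) :
    ([] : List A) ∈ Lang F :=
  ⟨x, hx, 0, fun j hj => absurd hj (by simp)⟩

lemma subshift_inU {F : Set (List A)} {x : ℕ → A} (hx : x ∈ SubshiftOf F) :
    InU F (SubshiftOf F) :=
  cset_nil_nil ▸ InU.base (nil_mem_lang hx) (nil_mem_lang hx)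

lemma empty_inU {F : Set (List A)} {x : ℕ → A} (hx : x ∈ SubshiftOf F) :
    InU F (∅ : Set (ℕ → A)) := by
  have h := InU.compl (subshift_inU hx)
  simpa using h

lemma wcat_mem_cset_iff {F : Set (List A)} {α β : List A} {x : ℕ → A}
    (hβx : wcat β x ∈ SubshiftOf F) :
    wcat β x ∈ Cset F α β ↔ wcat α x ∈ SubshiftOf F := by
  constructor
  · rintro ⟨z, hz, -, hαz⟩
    rw [wcat_right_inj hz]
    exact hαz
  · intro h
    exact ⟨x, rfl, hβx, h⟩

lemma take_eq_of_wcat_eq {α δ : List A} {y z : ℕ → A} (h : wcat α y = wcat δ z)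
    (hle : δ.length ≤ α.length) : α.take δ.length = δ := by
  apply List.ext_getElem (by simp [hle])
  intro i hi1 hi2
  have hi : i < δ.length := hi2
  have e1 : wcat α y i = α[i] := wcat_lt (lt_of_lt_of_le hi hle)
  have e2 : wcat δ z i = δ[i] := wcat_lt hi
  rw [List.getElem_take, ← e1, h, e2]

lemma transfer {F : Set (List A)} {α β : List A} (hα : α ∈ Lang F) (hβ : β ∈ Lang F)
    {S : Set (ℕ → A)} (hS : InU F S) :
    ∃ B : Set (ℕ → A), InU F B ∧ ∀ y : ℕ → A, wcat β y ∈ SubshiftOf F →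
      (wcat β y ∈ B ↔ wcat α y ∈ SubshiftOf F ∧ wcat α y ∈ S) := by
  obtain ⟨x0, hx0, -⟩ := id hα
  have hempty : InU F (∅ : Set (ℕ → A)) := empty_inU hx0
  induction hS with
  | @base γ δ hγ hδ =>
    rcases le_or_gt δ.length α.length with h1 | h1
    · by_cases h2 : α.take δ.length = δ
      · set ε := α.drop δ.length with hε
        have hαδε : α = δ ++ ε := by rw [← h2, hε, List.take_append_drop]
        have key : ∀ y : ℕ → A, (wcat α y ∈ SubshiftOf F ∧ wcat α y ∈ Cset F γ δ) ↔
            (wcat α y ∈ SubshiftOf F ∧ wcat (γ ++ ε) y ∈ SubshiftOf F) := by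
          intro y
          constructor
          · rintro ⟨h, z, hz, -, hγz⟩
            refine ⟨h, ?_⟩
            have hzz : wcat ε y = z := by
              apply wcat_right_inj (w := δ)
              rw [wcat_wcat, ← hαδε]
              exact hz
            rw [← wcat_wcat, hzz]
            exact hγz
          · rintro ⟨h, hg⟩
            refine ⟨h, wcat ε y, ?_, ?_, ?_⟩
            · rw [wcat_wcat, ← hαδε]
            · rw [wcat_wcat, ← hαδε]; exact h
            · rw [wcat_wcat]; exact hg
        by_cases h3 : (γ ++ ε) ∈ Lang F
        · refine ⟨Cset F α β ∩ Cset F (γ ++ ε) β,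
            InU.inter (InU.base hα hβ) (InU.base h3 hβ), fun y hβy => ?_⟩
          rw [Set.mem_inter_iff, wcat_mem_cset_iff hβy, wcat_mem_cset_iff hβy, key y]
        · refine ⟨∅, hempty, fun y hβy => ?_⟩
          simp only [Set.mem_empty_iff_false, false_iff]
          intro hc
          rw [key y] at hc
          exact h3 (mem_lang_of hc.2)
      · refine ⟨∅, hempty, fun y hβy => ?_⟩
        simp only [Set.mem_empty_iff_false, false_iff]
        rintro ⟨-, z, hz, -, -⟩
        exact h2 (take_eq_of_wcat_eq hz h1)
    · by_cases h2 : δ.take α.length = α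
      · set e := δ.drop α.length with he
        have hδαe : δ = α ++ e := by rw [← h2, he, List.take_append_drop]
        have key : ∀ y : ℕ → A, wcat β y ∈ SubshiftOf F →
            ((wcat α y ∈ SubshiftOf F ∧ wcat α y ∈ Cset F γ δ) ↔
             (wcat α y ∈ SubshiftOf F ∧ wcat β y ∈ Cset F γ (β ++ e))) := by
          intro y hβy
          constructor
          · rintro ⟨h, z, hz, hδz, hγz⟩
            have hy : y = wcat e z := by
              apply wcat_right_inj (w := α)
              rw [wcat_wcat, ← hδαe]
              exact hz
            refine ⟨h, z, ?_, ?_, hγz⟩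
            · rw [hy, wcat_wcat]
            · rw [← wcat_wcat, ← hy]; exact hβy
          · rintro ⟨h, z, hz, hbez, hγz⟩
            have hy : y = wcat e z := by
              apply wcat_right_inj (w := β)
              rw [wcat_wcat]
              exact hz
            refine ⟨h, z, ?_, ?_, hγz⟩
            · rw [hδαe, ← wcat_wcat, ← hy]
            · rw [hδαe, ← wcat_wcat, ← hy]; exact h
        by_cases h3 : (β ++ e) ∈ Lang F
        · refine ⟨Cset F α β ∩ Cset F γ (β ++ e),
            InU.inter (InU.base hα hβ) (InU.base hγ h3), fun y hβy => ?_⟩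
          rw [Set.mem_inter_iff, wcat_mem_cset_iff hβy, key y hβy]
        · refine ⟨∅, hempty, fun y hβy => ?_⟩
          simp only [Set.mem_empty_iff_false, false_iff]
          intro hc
          rw [key y hβy] at hc
          obtain ⟨-, z, hz, hin, -⟩ := hc
          exact h3 (mem_lang_of hin)
      · refine ⟨∅, hempty, fun y hβy => ?_⟩
        simp only [Set.mem_empty_iff_false, false_iff]
        rintro ⟨-, z, hz, -, -⟩
        exact h2 (take_eq_of_wcat_eq hz.symm (le_of_lt h1))
  | union hS hT ihS ihT =>
    obtain ⟨B1, hB1, hh1⟩ := ihS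
    obtain ⟨B2, hB2, hh2⟩ := ihT
    refine ⟨B1 ∪ B2, InU.union hB1 hB2, fun y hy => ?_⟩
    have e1 := hh1 y hy
    have e2 := hh2 y hy
    simp only [Set.mem_union]
    tauto
  | inter hS hT ihS ihT =>
    obtain ⟨B1, hB1, hh1⟩ := ihS
    obtain ⟨B2, hB2, hh2⟩ := ihT
    refine ⟨B1 ∩ B2, InU.inter hB1 hB2, fun y hy => ?_⟩
    have e1 := hh1 y hy
    have e2 := hh2 y hy
    simp only [Set.mem_inter_iff]
    tauto
  | compl hS ihS =>
    obtain ⟨B, hB, hh⟩ := ihS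
    refine ⟨Cset F α β ∩ (SubshiftOf F \ B),
      InU.inter (InU.base hα hβ) (InU.compl hB), fun y hy => ?_⟩
    have e1 := hh y hy
    have e2 := wcat_mem_cset_iff (α := α) (F := F) hy
    simp only [Set.mem_inter_iff, Set.mem_diff]
    constructor
    · rintro ⟨hc, -, hnB⟩
      have hαX := e2.1 hc
      refine ⟨hαX, hαX, fun hαS => hnB (e1.2 ⟨hαX, hαS⟩)⟩
    · rintro ⟨hαX, -, hnS⟩
      exact ⟨e2.2 hαX, hy, fun hyB => hnS ((e1.1 hyB).2)⟩

/-- The canonical map `ι : X → 𝒰̂`. -/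
def iotaU {F : Set (List A)} (x : ↥(SubshiftOf F)) : UltraU F where
  sets := {S | InU F S ∧ (x : ℕ → A) ∈ S}
  mem_inU := fun S hS => hS.1
  nonempty := ⟨SubshiftOf F, subshift_inU x.2, x.2⟩
  empty_not_mem := fun h => h.2
  inter_mem := fun S hS T hT => ⟨InU.inter hS.1 hT.1, hS.2, hT.2⟩
  superset_mem := fun S hS T hT hsub => ⟨hT, hsub hS.2⟩
  prime := fun S T hS hT hST => hST.2.elim (fun h => Or.inl ⟨hS, h⟩) (fun h => Or.inr ⟨hT, h⟩)

lemma open_ex {F : Set (List A)} {U : Set (UltraU F)}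
    (hU : TopologicalSpace.GenerateOpen
      {V | ∃ S : Set (ℕ → A), InU F S ∧ V = Oset F S} U) :
    ∀ ξ ∈ U, ∃ S, InU F S ∧ S ∈ ξ.sets ∧ Oset F S ⊆ U := by
  induction hU with
  | basic V hV =>
    obtain ⟨S, hS, rfl⟩ := hV
    exact fun ξ hξ => ⟨S, hS, hξ, subset_rfl⟩
  | univ =>
    intro ξ _
    obtain ⟨S, hS⟩ := ξ.nonempty
    exact ⟨S, ξ.mem_inU S hS, hS, Set.subset_univ _⟩
  | inter U V hU hV ihU ihV =>
    intro ξ hξ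
    obtain ⟨S, hS, hSξ, hSU⟩ := ihU ξ hξ.1
    obtain ⟨T, hT, hTξ, hTV⟩ := ihV ξ hξ.2
    refine ⟨S ∩ T, InU.inter hS hT, ξ.inter_mem S hSξ T hTξ, fun η hη => ?_⟩
    exact ⟨hSU (η.superset_mem _ hη S hS Set.inter_subset_left),
           hTV (η.superset_mem _ hη T hT Set.inter_subset_right)⟩
  | sUnion s hs ih =>
    intro ξ hξ
    obtain ⟨t, ht, hξt⟩ := hξ
    obtain ⟨S, p1, p2, p3⟩ := ih t ht ξ hξt
    exact ⟨S, p1, p2, p3.trans (Set.subset_sUnion_of_mem ht)⟩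

end AuxLemmas


theorem iota_injective_dense_equivariant {A : Type*} (F : Set (List A)) :
    ∃ ι : ↥(SubshiftOf F) → UltraU F,
      (∀ x : ↥(SubshiftOf F),
        (ι x).sets = {S : Set (ℕ → A) | InU F S ∧ (x : ℕ → A) ∈ S}) ∧
      Function.Injective ι ∧
      Dense (Set.range ι) ∧
      ∀ α β : List A, α ∈ Lang F → β ∈ Lang F → ReducedPair α β →
        ∀ (x : ℕ → A) (hβx : wcat β x ∈ SubshiftOf F) (hαx : wcat α x ∈ SubshiftOf F),
          Cset F α β ∈ (ι ⟨wcat β x, hβx⟩).sets ∧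
          {S : Set (ℕ → A) | InU F S ∧
              ∃ B ∈ (ι ⟨wcat β x, hβx⟩).sets, relRange F B β ⊆ relRange F S α}
            = (ι ⟨wcat α x, hαx⟩).sets := by
  refine ⟨iotaU, fun x => rfl, ?_, ?_, ?_⟩
  · -- injective
    intro x y hxy
    by_contra hne
    have hne' : (x : ℕ → A) ≠ (y : ℕ → A) := fun h => hne (Subtype.ext h)
    obtain ⟨n, hn⟩ := Function.ne_iff.1 hne'
    set w : List A := List.ofFn (fun j : Fin (n + 1) => (x : ℕ → A) j) with hw
    have hwlen : w.length = n + 1 := by simp [hw]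
    have hwget : ∀ j (hj : j < w.length), w[j] = (x : ℕ → A) j := by
      intro j hj
      simp only [hw, List.getElem_ofFn]
    have hz : (x : ℕ → A) = wcat w (fun m => (x : ℕ → A) (m + w.length)) := by
      funext m
      unfold wcat
      by_cases h : m < w.length
      · rw [dif_pos h, hwget m h]
      · rw [dif_neg h]
        show (x : ℕ → A) m = (x : ℕ → A) (m - w.length + w.length)
        rw [Nat.sub_add_cancel (Nat.le_of_not_lt h)]
    have hwX : wcat w (fun m => (x : ℕ → A) (m + w.length)) ∈ SubshiftOf F := by
      rw [← hz]; exact x.2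
    have hmemZ : (x : ℕ → A) ∈ Cset F [] w :=
      ⟨fun m => (x : ℕ → A) (m + w.length), hz, hwX, by rw [wcat_nil]; exact tail_mem x.2 w.length⟩
    have hInU : InU F (Cset F [] w) := InU.base (nil_mem_lang x.2) (mem_lang_of hwX)
    have hy : Cset F [] w ∈ (iotaU y).sets := hxy ▸ ⟨hInU, hmemZ⟩
    obtain ⟨-, z, hzeq, -, -⟩ := hy
    apply hn
    have h1 : (y : ℕ → A) n = w[n]'(by omega) := by
      rw [hzeq]; exact wcat_lt (by omega)
    rw [h1, hwget n (by omega)]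
  · -- dense
    rw [dense_iff_inter_open]
    intro U hUopen hUne
    obtain ⟨ξ, hξ⟩ := hUne
    obtain ⟨S, hS, hSξ, hsub⟩ := open_ex hUopen ξ hξ
    have hSne : S.Nonempty := by
      rcases S.eq_empty_or_nonempty with rfl | h
      · exact absurd hSξ ξ.empty_not_mem
      · exact h
    obtain ⟨x, hxS⟩ := hSne
    have hxX : x ∈ SubshiftOf F := inU_subset hS hxS
    exact ⟨iotaU ⟨x, hxX⟩, hsub ⟨hS, hxS⟩, ⟨x, hxX⟩, rfl⟩
  · -- equivariance
    intro α β hα hβ _hred x hβx hαx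
    refine ⟨⟨InU.base hα hβ, x, rfl, hβx, hαx⟩, ?_⟩
    ext S
    simp only [Set.mem_setOf_eq]
    constructor
    · rintro ⟨hSU, B, ⟨hBU, hxB⟩, hsub⟩
      exact ⟨hSU, (hsub ⟨drop_wcat hβx, hxB⟩).2⟩
    · rintro ⟨hSU, hαxS⟩
      obtain ⟨B, hBU, hB⟩ := transfer hα hβ hSU
      refine ⟨hSU, B, ⟨hBU, (hB x hβx).2 ⟨hαx, hαxS⟩⟩, ?_⟩
      rintro y ⟨hyX, hβyB⟩
      have hβyX : wcat β y ∈ SubshiftOf F := inU_subset hBU hβyB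
      exact ⟨hyX, ((hB y hβyX).1 hβyB).2⟩
end
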